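/- arXiv:2002.11795 — 2 statements merged into one kernel-verified Lean document; each statement's English description precedes it below -/
import Mathlib

section
/- Let n, d be real numbers with n ≥ 2, set L := logb 2 n, and suppose 0 < d ≤ n and n·L³ ≤ d⁴. Define f(t) := max 1 (t/d) + √(n/t) · (max 1 (√(t·L)/d) + max 1 (√t/d)). Then f((n·d²)^{1/3}) ≤ 3·(n/d)^{1/3}. -/
/-! Write `n = a³` and `d = b³`, so that the chosen parameter is `t = a·b²`. Then `t/d` and `√(n/t)`
both equal `(n/d)^{1/3} = a/b`, which is at least `1` because `d ≤ n`, while the hypothesis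
`n·L³ ≤ d⁴` is `a·L ≤ b⁴` after taking cube roots, i.e. `t·L ≤ d²`. Hence both inner maxima are `1`
and `f(t) = a/b + a/b·(1 + 1)`. -/

open Real

/-- The round complexity `f(t)` of the quantum-walk algorithm, with `L` standing for `log₂ n`. -/
noncomputable def walkRounds (n d L t : ℝ) : ℝ :=
  max 1 (t / d) + √(n / t) * (max 1 (√(t * L) / d) + max 1 (√t / d))

lemma exists_pos_pow_three_eq {x : ℝ} (hx : 0 < x) : ∃ a, 0 < a ∧ a ^ 3 = x :=
  ⟨x ^ ((3 : ℕ)⁻¹ : ℝ), by positivity, rpow_inv_natCast_pow hx.le three_ne_zero⟩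

lemma pow_three_rpow_one_div_three {x : ℝ} (hx : 0 ≤ x) : (x ^ 3) ^ ((1 : ℝ) / 3) = x := by
  rw [one_div]
  exact_mod_cast pow_rpow_inv_natCast hx three_ne_zero

lemma walkRounds_pow_three_eq {a b L : ℝ} (ha : 0 < a) (hb : 0 < b) (hL : 1 ≤ L)
    (hba : b ≤ a) (haL : a * L ≤ b ^ 4) :
    walkRounds (a ^ 3) (b ^ 3) L (a * b ^ 2) = 3 * (a / b) := by
  have hb3 : 0 < b ^ 3 := by positivity
  have h_setup : a * b ^ 2 / b ^ 3 = a / b := by field_simp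
  have h_iters : √(a ^ 3 / (a * b ^ 2)) = a / b := by
    rw [show a ^ 3 / (a * b ^ 2) = (a / b) ^ 2 by field_simp]
    exact sqrt_sq (by positivity)
  have h_check : √(a * b ^ 2 * L) ≤ b ^ 3 :=
    sqrt_le_iff.2 ⟨hb3.le, by nlinarith [pow_pos hb 2]⟩
  have h_update : √(a * b ^ 2) ≤ b ^ 3 :=
    sqrt_le_iff.2 ⟨hb3.le, by nlinarith [pow_pos hb 2]⟩
  unfold walkRounds
  rw [h_setup, h_iters, max_eq_right ((one_le_div hb).2 hba),
    max_eq_left ((div_le_one hb3).2 h_check), max_eq_left ((div_le_one hb3).2 h_update)]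
  ring

/-- Optimization in the proof of Theorem 3.7 in the regime `n·(log n)³ ≤ d⁴`,
with parameter choice `t := (n·d²)^{1/3}`: `f((n·d²)^{1/3}) ≤ 3·(n/d)^{1/3}`. -/
theorem stmt_8 (n d : ℝ) (hn : 2 ≤ n) (hd0 : 0 < d) (hdn : d ≤ n)
    (hd4 : n * (Real.logb 2 n) ^ 3 ≤ d ^ 4) :
    (fun t : ℝ => max 1 (t / d) +
        Real.sqrt (n / t) *
          (max 1 (Real.sqrt (t * Real.logb 2 n) / d) + max 1 (Real.sqrt t / d)))
        ((n * d ^ 2) ^ ((1 : ℝ) / 3))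
      ≤ 3 * (n / d) ^ ((1 : ℝ) / 3) := by
  have hL : 1 ≤ logb 2 n := by
    simpa using logb_le_logb_of_le (b := 2) (by norm_num) (by norm_num) hn
  obtain ⟨a, ha, rfl⟩ := exists_pos_pow_three_eq (by linarith : 0 < n)
  obtain ⟨b, hb, rfl⟩ := exists_pos_pow_three_eq hd0
  have hba : b ≤ a := le_of_pow_le_pow_left₀ three_ne_zero ha.le hdn
  have haL : a * logb 2 (a ^ 3) ≤ b ^ 4 :=
    le_of_pow_le_pow_left₀ three_ne_zero (by positivity) (by linarith)
  rw [show a ^ 3 * (b ^ 3) ^ 2 = (a * b ^ 2) ^ 3 by ring, show a ^ 3 / b ^ 3 = (a / b) ^ 3 by ring,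
    pow_three_rpow_one_div_three (by positivity), pow_three_rpow_one_div_three (by positivity)]
  exact (walkRounds_pow_three_eq ha hb hL hba haL).le
end

section
/- Let n, d be real numbers with n ≥ 2, set L := logb 2 n, and suppose 1 ≤ d ≤ n and d⁴ ≤ n·L³. Define f(t) := max 1 (t/d) + √(n/t) · (max 1 (√(t·L)/d) + max 1 (√t/d)). Then there exists a real number t with 1 ≤ t ≤ n such that f(t) ≤ 3·√(n·L)/d. -/
/-!
Write `B = √(n·L)/d`. Each of the three summands of `f(t)` is at most `B` as soon as
`t ≤ n`, `t ≤ √(n·L)` and `d² ≤ t·L`: the last condition makes `√(n/t) ≤ B`, which controls both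
`max` factors. For `d ≤ L` the choice `t = d` satisfies these; for `L ≤ d` the choice
`t = d²/L` does, where `t ≤ √(n·L)` is exactly `d⁴ ≤ n·L³`.
-/

open Real

section

variable {n d L t : ℝ}

theorem one_le_logb_two_of_two_le (hn : 2 ≤ n) : 1 ≤ logb 2 n := by
  rw [← logb_self_eq_one (b := 2) (by norm_num)]
  exact logb_le_logb_of_le (by norm_num) (by norm_num) hn

theorem sqrt_div_mul_sqrt_mul (hn : 0 ≤ n) (ht : 0 < t) (s : ℝ) :
    √(n / t) * √(t * s) = √(n * s) := by
  rw [← sqrt_mul (div_nonneg hn ht.le)]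
  congr 1
  field_simp

theorem sqrt_div_le_sqrt_mul_div (hn : 0 ≤ n) (ht : 0 < t) (hd : 0 < d)
    (hdt : d ^ 2 ≤ t * L) : √(n / t) ≤ √(n * L) / d := by
  rw [le_div_iff₀ hd, ← sqrt_sq hd.le, ← sqrt_mul (div_nonneg hn ht.le)]
  refine sqrt_le_sqrt ?_
  calc n / t * d ^ 2 ≤ n / t * (t * L) := by gcongr
    _ = n * L := by field_simp

theorem sqrt_div_mul_max_le {s : ℝ} (hn : 0 ≤ n) (ht : 0 < t) (hd : 0 < d)
    (hsL : s ≤ L) (hdt : d ^ 2 ≤ t * L) :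
    √(n / t) * max 1 (√(t * s) / d) ≤ √(n * L) / d := by
  rw [mul_max_of_nonneg _ _ (sqrt_nonneg _), mul_one, ← mul_div_assoc,
    sqrt_div_mul_sqrt_mul hn ht]
  exact max_le (sqrt_div_le_sqrt_mul_div hn ht hd hdt) (by gcongr)

theorem walkRounds_le (ht : 0 < t) (hd : 0 < d) (hL : 1 ≤ L) (htn : t ≤ n)
    (htL : t ≤ √(n * L)) (hdt : d ^ 2 ≤ t * L) :
    walkRounds n d L t ≤ 3 * √(n * L) / d := by
  have hn : 0 ≤ n := ht.le.trans htn
  have hsetup : max 1 (t / d) ≤ √(n * L) / d := by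
    refine max_le ?_ (by gcongr)
    rw [one_le_div hd, le_sqrt hd.le (by positivity)]
    nlinarith
  have hcheck := sqrt_div_mul_max_le hn ht hd le_rfl hdt
  have hupdate := sqrt_div_mul_max_le hn ht hd hL hdt
  rw [mul_one] at hupdate
  rw [walkRounds, mul_add, mul_div_assoc]
  linarith

end

/-- First case of Theorem 3.7: if `1 ≤ d ≤ n` and `d⁴ ≤ n·(log n)³`, then there is a
parameter `t ∈ [1, n]` with `f(t) ≤ 3·√(n·L)/d`, where
`f(t) = max 1 (t/d) + √(n/t)·(max 1 (√(t·L)/d) + max 1 (√t/d))` and `L = logb 2 n`. -/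
theorem stmt_9 (n d : ℝ) (hn : 2 ≤ n) (hd1 : 1 ≤ d) (hdn : d ≤ n)
    (hd4 : d ^ 4 ≤ n * (Real.logb 2 n) ^ 3) :
    ∃ t : ℝ, 1 ≤ t ∧ t ≤ n ∧
      max 1 (t / d) +
          Real.sqrt (n / t) *
            (max 1 (Real.sqrt (t * Real.logb 2 n) / d) + max 1 (Real.sqrt t / d))
        ≤ 3 * Real.sqrt (n * Real.logb 2 n) / d := by
  set L := logb 2 n
  have hL : 1 ≤ L := one_le_logb_two_of_two_le hn
  have hd : 0 < d := by linarith
  rcases le_total d L with hdL | hLd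
  · have hd2 : d ^ 2 ≤ n * L := by nlinarith
    exact ⟨d, hd1, hdn, walkRounds_le hd hd hL hdn (le_sqrt_of_sq_le hd2) (by nlinarith)⟩
  · have hL0 : 0 < L := by linarith
    have hd2 : d ^ 2 ≤ n * L := by
      refine le_of_mul_le_mul_right ?_ (pow_pos hL0 2)
      nlinarith [pow_le_pow_left₀ hL0.le hLd 2]
    have htn : d ^ 2 / L ≤ n := by rwa [div_le_iff₀ hL0]
    refine ⟨d ^ 2 / L, ?_, htn, walkRounds_le (by positivity) hd hL htn ?_ ?_⟩
    · rw [one_le_div hL0]; nlinarith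
    · apply le_sqrt_of_sq_le
      rw [div_pow, div_le_iff₀ (by positivity)]
      linarith [show n * L * L ^ 2 = n * L ^ 3 by ring]
    · rw [div_mul_cancel₀ _ hL0.ne']
end
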